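/- arXiv:1501.03410 — 7 statements merged into one kernel-verified Lean document; each statement's English description precedes it below -/
import Mathlib

section
/- (Merson's Lemma) Let (G, γ) be a (not necessarily Hausdorff) topological group and H a (not necessarily closed) subgroup of G. If γ₁ ⊆ γ is a coarser group topology on G such that γ₁ and γ induce the same subspace topology on H and the same quotient topology on the coset space G/H, then γ₁ = γ. -/
/-!
Since both topologies are group topologies, it suffices to compare their neighbourhoods of `1`.
Given a `γ`-neighbourhood `U` of `1`, take `V` with `V * V ⊆ U`. Equality on `H` gives a
`γ₁`-neighbourhood `W` of `1` with `W * W ∩ H ⊆ V`, and equality on `G ⧸ H` makes the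
`H`-saturation `(V ∩ W⁻¹) * H` of a `γ`-open set `γ₁`-open. An element `x = v * h` of
`W ∩ ((V ∩ W⁻¹) * H)` has `h = v⁻¹ * x ∈ W * W ∩ H ⊆ V`, so `x ∈ V * V ⊆ U`.
-/

open Pointwise Topology TopologicalSpace

theorem Subgroup.inter_mul_subset_mul_of_mul_mem {G : Type*} [Group G] {H : Subgroup G}
    {V W : Set G} (hW : ∀ a ∈ W, ∀ b ∈ W, a * b ∈ H → a * b ∈ V) :
    W ∩ ((V ∩ W⁻¹) * H) ⊆ V * V := by
  rintro x ⟨hxW, v, ⟨hvV, hvW⟩, h, hh, rfl⟩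
  have hhV : v⁻¹ * (v * h) ∈ V := hW _ hvW _ hxW (by simpa using hh)
  exact Set.mul_mem_mul hvV (by simpa using hhV)

theorem exists_mem_nhds_inter_subset_of_induced_eq {X : Type*} {t t' : TopologicalSpace X}
    {s : Set X} (hs : induced ((↑) : s → X) t' = induced ((↑) : s → X) t) (x : s)
    {V : Set X} (hV : V ∈ @nhds X t x) : ∃ W ∈ @nhds X t' x, W ∩ s ⊆ V := by
  have hcomap : Filter.comap ((↑) : s → X) (@nhds X t' x) =
      Filter.comap ((↑) : s → X) (@nhds X t x) := by
    rw [← @nhds_induced, ← @nhds_induced, hs]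
  obtain ⟨W, hW, hWV⟩ := Filter.mem_comap.1 (hcomap ▸ Filter.preimage_mem_comap hV)
  exact ⟨W, hW, fun y ⟨hyW, hys⟩ ↦ hWV (a := ⟨y, hys⟩) hyW⟩

theorem isOpen_mul_subgroup_of_coinduced_eq {G : Type*} [Group G] {t t' : TopologicalSpace G}
    (ht : @ContinuousConstSMul Gᵐᵒᵖ G t _) {H : Subgroup G}
    (hH : coinduced (QuotientGroup.mk : G → G ⧸ H) t' =
      coinduced (QuotientGroup.mk : G → G ⧸ H) t)
    {V : Set G} (hV : IsOpen[t] V) : IsOpen[t'] (V * H) := by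
  rw [← QuotientGroup.preimage_image_mk_eq_mul, ← isOpen_coinduced, hH, isOpen_coinduced,
    QuotientGroup.preimage_image_mk_eq_mul]
  exact @IsOpen.mul_right G t _ ht _ _ hV

theorem nhds_one_le_of_induced_eq_of_coinduced_eq {G : Type*} [Group G]
    {t t' : TopologicalSpace G} (ht : @IsTopologicalGroup G t _)
    (ht' : @IsTopologicalGroup G t' _) (hle : t ≤ t') {H : Subgroup G}
    (hsub : induced ((↑) : H → G) t' = induced ((↑) : H → G) t)
    (hquot : coinduced (QuotientGroup.mk : G → G ⧸ H) t' =
      coinduced (QuotientGroup.mk : G → G ⧸ H) t) :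
    @nhds G t' 1 ≤ @nhds G t 1 := by
  intro U hU
  obtain ⟨V, hV, hV1, hVU⟩ := @exists_open_nhds_one_mul_subset G t _ ht.toContinuousMul _ hU
  obtain ⟨W₀, hW₀, hW₀V⟩ := exists_mem_nhds_inter_subset_of_induced_eq (s := (H : Set G))
    hsub 1 (@IsOpen.mem_nhds G t _ _ hV hV1)
  obtain ⟨W, hW, hW1, hWW₀⟩ :=
    @exists_open_nhds_one_mul_subset G t' _ ht'.toContinuousMul _ hW₀
  have hVW : IsOpen[t] (V ∩ W⁻¹) :=
    @IsOpen.inter G t _ _ hV (hle _ (@IsOpen.inv G t' _ ht'.toContinuousInv _ hW))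
  have hVWH : IsOpen[t'] ((V ∩ W⁻¹) * H) :=
    isOpen_mul_subgroup_of_coinduced_eq (by let _ := t; infer_instance) hquot hVW
  have hmem : (1 : G) ∈ W ∩ ((V ∩ W⁻¹) * H) :=
    ⟨hW1, 1, ⟨hV1, by simpa using hW1⟩, 1, H.one_mem, mul_one 1⟩
  refine Filter.mem_of_superset (@IsOpen.mem_nhds G t' _ _ (hW.inter hVWH) hmem) ?_
  refine (Subgroup.inter_mul_subset_mul_of_mul_mem fun a ha b hb hab ↦ ?_).trans hVU
  exact hW₀V ⟨hWW₀ (Set.mul_mem_mul ha hb), hab⟩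

/-- **Merson's Lemma.** Let `γ` be a (not necessarily Hausdorff) group topology on `G` and `H`
a subgroup.  If `γ₁` is a coarser group topology (`γ ≤ γ₁` in Mathlib's order, where smaller
means finer) inducing the same subspace topology on `H` and the same quotient topology on the
left coset space `G ⧸ H`, then `γ₁ = γ`. -/
theorem merson_lemma {G : Type*} [Group G] (γ γ₁ : TopologicalSpace G)
    (hγ : @IsTopologicalGroup G γ _) (hγ₁ : @IsTopologicalGroup G γ₁ _)
    (hle : γ ≤ γ₁) (H : Subgroup G)
    (hsub : TopologicalSpace.induced ((↑) : H → G) γ₁ =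
      TopologicalSpace.induced ((↑) : H → G) γ)
    (hquot : TopologicalSpace.coinduced (QuotientGroup.mk : G → G ⧸ H) γ₁ =
      TopologicalSpace.coinduced (QuotientGroup.mk : G → G ⧸ H) γ) :
    γ₁ = γ :=
  IsTopologicalGroup.ext hγ₁ hγ <| le_antisymm
    (nhds_one_le_of_induced_eq_of_coinduced_eq hγ hγ₁ hle hsub hquot)
    (nhds_mono hle)
end

section
/- Let H be a subgroup of a Hausdorff topological group G such that H is complete (in its two-sided uniformity), the coset space G/H is compact, and H is minimal as a topological group. Then G is minimal. -/
/-- The two-sided (Raikov) uniformity of a topological group: the supremum of the right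
uniformity and the left uniformity (the latter being the pullback of the right uniformity
under inversion). -/
noncomputable def twoSidedUniformity (G : Type*) [Group G] [TopologicalSpace G]
    [IsTopologicalGroup G] : UniformSpace G :=
  IsTopologicalGroup.rightUniformSpace G ⊔
    UniformSpace.comap (fun x : G => x⁻¹) (IsTopologicalGroup.rightUniformSpace G)

/-- A topological group is minimal if it admits no strictly coarser Hausdorff group topology. -/
def IsMinimalTopGroup (G : Type*) [Group G] (τ : TopologicalSpace G) : Prop :=
  ∀ t : TopologicalSpace G, @T2Space G t → @IsTopologicalGroup G t _ → τ ≤ t → t = τ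

/-!
Let `t` be a coarser Hausdorff group topology on `G`. By minimality of `H`, `t` induces the
original topology on `H`; completeness of `H` then makes `H` closed for `t`, so `G ⧸ H` is
Hausdorff for `t`, and the compact original quotient topology cannot be strictly finer than it.
A group topology that is coarser than the original one and induces the same topologies on `H`
and on `G ⧸ H` is equal to it (Merson's lemma).
-/

open Filter Topology Set

/- `⊔` of uniform structures is the finest uniformity coarser than both, so bounding the topology
of `twoSidedUniformity` by the group topology needs a common coarsening of the right and left
uniformities that still induces the group topology: the Roelcke uniformity. -/

namespace IsTopologicalGroup

variable {G : Type*} [Group G]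

def roelckeEntourage (V : Set G) : SetRel G G :=
  {p | p.2 ∈ image2 (fun v w => v * p.1 * w) V V}

theorem roelckeEntourage_mono : Monotone (roelckeEntourage (G := G)) := by
  rintro V W h p ⟨v, hv, w, hw, hp⟩
  exact ⟨v, h hv, w, h hw, hp⟩

variable [TopologicalSpace G]

theorem hasBasis_lift'_roelckeEntourage :
    ((𝓝 (1 : G)).lift' roelckeEntourage).HasBasis (· ∈ 𝓝 (1 : G)) roelckeEntourage :=
  (𝓝 (1 : G)).basis_sets.lift' roelckeEntourage_mono

variable [IsTopologicalGroup G]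

theorem hasBasis_nhds_image2_mul_mul (x : G) :
    (𝓝 x).HasBasis (· ∈ 𝓝 (1 : G)) (fun V => image2 (fun v w => v * x * w) V V) := by
  have hmap : map (fun p : G × G => p.1 * x * p.2) (𝓝 1 ×ˢ 𝓝 1) = 𝓝 x := by
    refine le_antisymm ?_ ?_
    · have h := (by fun_prop : Continuous fun p : G × G => p.1 * x * p.2).tendsto (1, 1)
      rwa [nhds_prod_eq, one_mul, mul_one] at h
    · calc 𝓝 x = map (fun p : G × G => p.1 * x * p.2) (pure 1 ×ˢ 𝓝 1) := by
            simp [map_map, Function.comp_def]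
        _ ≤ _ := map_mono (prod_mono (pure_le_nhds 1) le_rfl)
  rw [← hmap]
  convert (𝓝 (1 : G)).basis_sets.prod_self.map (fun p : G × G => p.1 * x * p.2) using 2 with V
  exact (image_prod fun v w => v * x * w).symm

variable (G) in
noncomputable def roelckeUniformSpace : UniformSpace G where
  uniformity := (𝓝 (1 : G)).lift' roelckeEntourage
  symm := by
    rw [hasBasis_lift'_roelckeEntourage.tendsto_iff hasBasis_lift'_roelckeEntourage]
    refine fun V hV => ⟨V⁻¹, inv_mem_nhds_one G hV, ?_⟩
    rintro ⟨a, b⟩ ⟨v, hv, w, hw, hb : v * a * w = b⟩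
    exact ⟨v⁻¹, hv, w⁻¹, hw, by simp [← hb, mul_assoc]⟩
  comp := by
    rw [hasBasis_lift'_roelckeEntourage.ge_iff]
    intro V hV
    obtain ⟨W, hW, hWV⟩ := exists_nhds_one_split hV
    refine mem_of_superset (mem_lift' (hasBasis_lift'_roelckeEntourage.mem_of_mem hW)) ?_
    rintro ⟨a, c⟩ ⟨b, ⟨v, hv, w, hw, hb : v * a * w = b⟩,
      ⟨v', hv', w', hw', hc : v' * b * w' = c⟩⟩
    exact ⟨v' * v, hWV _ hv' _ hv, w * w', hWV _ hw _ hw', by simp [← hc, ← hb, mul_assoc]⟩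
  nhds_eq_comap_uniformity x :=
    (hasBasis_nhds_image2_mul_mul x).eq_of_same_basis (hasBasis_lift'_roelckeEntourage.comap _)

variable (G)

theorem rightUniformSpace_le_roelckeUniformSpace :
    rightUniformSpace G ≤ roelckeUniformSpace G := by
  refine hasBasis_lift'_roelckeEntourage.ge_iff.2 fun V hV => ?_
  refine mem_of_superset (preimage_mem_comap hV) ?_
  rintro ⟨a, b⟩ (h : b * a⁻¹ ∈ V)
  exact ⟨b * a⁻¹, h, 1, mem_of_mem_nhds hV, by simp⟩

theorem comap_inv_rightUniformSpace_le_roelckeUniformSpace :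
    (rightUniformSpace G).comap (·⁻¹) ≤ roelckeUniformSpace G := by
  refine hasBasis_lift'_roelckeEntourage.ge_iff.2 fun V hV => ?_
  refine mem_of_superset (preimage_mem_comap (preimage_mem_comap (inv_mem_nhds_one G hV))) ?_
  rintro ⟨a, b⟩ (h : (b⁻¹ * a⁻¹⁻¹)⁻¹ ∈ V)
  exact ⟨1, mem_of_mem_nhds hV, a⁻¹ * b, by simpa using h, by simp⟩

end IsTopologicalGroup

open IsTopologicalGroup in
theorem toTopologicalSpace_twoSidedUniformity (G : Type*) [Group G] [TopologicalSpace G]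
    [IsTopologicalGroup G] : (twoSidedUniformity G).toTopologicalSpace = ‹TopologicalSpace G› :=
  le_antisymm
    (UniformSpace.toTopologicalSpace_mono <| sup_le
      (rightUniformSpace_le_roelckeUniformSpace G)
      (comap_inv_rightUniformSpace_le_roelckeUniformSpace G))
    (UniformSpace.toTopologicalSpace_mono le_sup_left)

theorem CompleteSpace.of_le {α : Type*} {u v : UniformSpace α} (huv : u ≤ v)
    (htop : v.toTopologicalSpace ≤ u.toTopologicalSpace) (hv : @CompleteSpace α v) :
    @CompleteSpace α u := by
  refine @CompleteSpace.mk α u fun {f} hf => ?_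
  obtain ⟨x, hx⟩ := @CompleteSpace.complete α v _ f ⟨hf.1, hf.2.trans huv⟩
  exact ⟨x, hx.trans (nhds_mono htop)⟩

theorem Subgroup.rightUniformSpace_eq_comap {G : Type*} [Group G] [TopologicalSpace G]
    [IsTopologicalGroup G] (H : Subgroup G) :
    IsTopologicalGroup.rightUniformSpace H =
      (IsTopologicalGroup.rightUniformSpace G).comap ((↑) : H → G) := by
  ext : 1
  simp only [uniformity_comap, uniformity_eq_comap_nhds_one', nhds_induced, Filter.comap_comap]
  rfl

theorem Subgroup.isClosed_of_completeSpace_twoSidedUniformity {G : Type*} [Group G]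
    [TopologicalSpace G] [IsTopologicalGroup G] [T2Space G] (H : Subgroup G)
    (hH : @CompleteSpace H (twoSidedUniformity H)) : IsClosed (H : Set G) := by
  let := IsTopologicalGroup.rightUniformSpace G
  have : @CompleteSpace H (IsTopologicalGroup.rightUniformSpace H) :=
    .of_le le_sup_left (toTopologicalSpace_twoSidedUniformity H).le hH
  rw [H.rightUniformSpace_eq_comap] at this
  exact (completeSpace_coe_iff_isComplete.1 this).isClosed

theorem TopologicalSpace.eq_of_le_of_compactSpace_of_t2Space {X : Type*}
    {t₁ t₂ : TopologicalSpace X} (h : t₁ ≤ t₂) [@CompactSpace X t₁] [@T2Space X t₂] :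
    t₁ = t₂ := by
  refine le_antisymm h fun U hU => ?_
  simpa using @Continuous.isClosedMap X X t₁ t₂ _ _ id (continuous_id_of_le h) _
    (@IsOpen.isClosed_compl X t₁ U hU)

theorem IsTopologicalGroup.eq_of_le_of_induced_eq_of_coinduced_eq {G : Type*} [Group G]
    {t τ : TopologicalSpace G} (hle : τ ≤ t) (ht : @IsTopologicalGroup G t _)
    (hτ : @IsTopologicalGroup G τ _) (H : Subgroup G)
    (hH : TopologicalSpace.induced ((↑) : H → G) t = TopologicalSpace.induced (↑) τ)
    (hQ : TopologicalSpace.coinduced ((↑) : G → G ⧸ H) t = TopologicalSpace.coinduced (↑) τ) :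
    t = τ := by
  refine ht.ext hτ (le_antisymm (fun U hU => ?_) (nhds_mono hle))
  obtain ⟨V, hV, hVV⟩ := exists_nhds_one_split hU
  have hcomap : comap ((↑) : H → G) (@nhds G t 1) = comap ((↑) : H → G) (𝓝 1) := by
    simpa only [nhds_induced, OneMemClass.coe_one] using congrArg (fun s => @nhds H s 1) hH
  obtain ⟨W, hW, hWV⟩ : ∃ W ∈ @nhds G t 1, ((↑) : H → G) ⁻¹' W ⊆ (↑) ⁻¹' V := by
    rw [← mem_comap, hcomap]
    exact preimage_mem_comap hV
  obtain ⟨W₁, hW₁, hW₁W⟩ := @exists_nhds_split_inv G t _ ht W hW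
  have hW₁' : W₁⁻¹ ∈ @nhds G t 1 := @inv_mem_nhds_one G t _ ht _ hW₁
  have hmap : map ((↑) : G → G ⧸ H) (@nhds G t 1) = map ((↑) : G → G ⧸ H) (𝓝 1) := by
    rw [← @QuotientGroup.nhds_eq G t _ _ H 1, ← @QuotientGroup.nhds_eq G τ _ _ H 1]
    exact congrArg (fun s => @nhds (G ⧸ H) s ((1 : G) : G ⧸ H)) hQ
  have hVW₁ : (QuotientGroup.mk : G → G ⧸ H) ⁻¹' (QuotientGroup.mk '' (V ∩ W₁⁻¹)) ∈
      @nhds G t 1 := by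
    rw [← mem_map, hmap]
    exact image_mem_map (inter_mem hV (nhds_mono hle hW₁'))
  -- `g = a * (a⁻¹ * g)` with `a ∈ V` and `a⁻¹ * g ∈ H ∩ W ⊆ V`
  filter_upwards [hVW₁, hW₁'] with g ⟨a, ⟨haV, haW⟩, hag⟩ hg
  have hag' : a⁻¹ * g ∈ V := @hWV ⟨_, QuotientGroup.eq.1 hag⟩ <| by
    simpa using hW₁W _ haW _ hg
  simpa using hVV _ haV _ hag'

theorem minimal_of_cocompact_complete_minimal_subgroup_general {G : Type*} [Group G]
    [TopologicalSpace G] [IsTopologicalGroup G] (H : Subgroup G)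
    (hcomplete : @CompleteSpace H (twoSidedUniformity H))
    (hcocompact : CompactSpace (G ⧸ H))
    (hmin : IsMinimalTopGroup H inferInstance) :
    IsMinimalTopGroup G inferInstance := by
  intro t ht2 ht hle
  have hH := hmin _ (@instT2SpaceSubtype G t _ ht2)
    (@Subgroup.instIsTopologicalGroupSubtypeMem G t _ ht H) (induced_mono hle)
  have hclosed : IsClosed[t] (H : Set G) :=
    @Subgroup.isClosed_of_completeSpace_twoSidedUniformity G _ t ht ht2 H
      (by convert hcomplete using 2)
  have hQ := @TopologicalSpace.eq_of_le_of_compactSpace_of_t2Space _ _ _ (coinduced_mono hle)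
    hcocompact (@QuotientGroup.instT2Space G _ t ht H hclosed)
  exact IsTopologicalGroup.eq_of_le_of_induced_eq_of_coinduced_eq hle ht inferInstance H hH hQ.symm

/-- If `H` is a subgroup of a Hausdorff topological group `G` which is complete in its
two-sided uniformity, such that `G ⧸ H` is compact and `H` is minimal, then `G` is minimal. -/
theorem minimal_of_cocompact_complete_minimal_subgroup {G : Type*} [Group G]
    [TopologicalSpace G] [IsTopologicalGroup G] [T2Space G] (H : Subgroup G)
    (hcomplete : @CompleteSpace H (twoSidedUniformity H))
    (hcocompact : CompactSpace (G ⧸ H))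
    (hmin : IsMinimalTopGroup H inferInstance) :
    IsMinimalTopGroup G inferInstance :=
  minimal_of_cocompact_complete_minimal_subgroup_general H hcomplete hcocompact hmin
end

section
/- Let X be a compact linearly ordered topological space. Then the continuous order-preserving maps from X to [0,1] separate the points of X. -/
/-!
If `[x, y]` contains a jump `a ⋖ b`, then `Iic a = Iio b` is clopen and the indicator of `Ioi a`
separates `x` from `y`. Otherwise `[x, y]` is densely ordered, so the rationals of `(0, 1)` embed
into it by an order embedding `φ`, and `z ↦ sup {q | φ q ≤ z}` separates `x` from `y`. It is
continuous because ℚ is dense: a rational `q` strictly between `f z` and a bound `a` gives an open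
ray at `φ q` around `z` on which `f` stays on the same side of `a`.
-/

open Set Filter

section

variable {X : Type*} [LinearOrder X]

lemma exists_ratIoo_btwn {a b : ℝ} (ha : 0 ≤ a) (hab : a < b) (hb : b ≤ 1) :
    ∃ q : Ioo (0 : ℚ) 1, a < q ∧ (q : ℝ) < b := by
  obtain ⟨q, haq, hqb⟩ := exists_rat_btwn hab
  exact ⟨⟨q, by exact_mod_cast ha.trans_lt haq, by exact_mod_cast hqb.trans_le hb⟩, haq, hqb⟩

section RationalCut

variable (φ : Ioo (0 : ℚ) 1 → X) (z : X)

def cutSet : Set ℝ := insert 0 ((fun q : Ioo (0 : ℚ) 1 ↦ ((q : ℚ) : ℝ)) '' {q | φ q ≤ z})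

/-- `sup {q | φ q ≤ z}`; `cutSet` adjoins `0` so that the supremum is over a nonempty set. -/
noncomputable def rationalCut : ℝ := sSup (cutSet φ z)

lemma bddAbove_cutSet : BddAbove (cutSet φ z) :=
  ⟨1, forall_mem_insert.2 ⟨zero_le_one, forall_mem_image.2 fun q _ ↦ by exact_mod_cast q.2.2.le⟩⟩

variable {φ z}

lemma rationalCut_le_of_forall {a : ℝ} (ha : 0 ≤ a) (h : ∀ q, φ q ≤ z → (q : ℝ) ≤ a) :
    rationalCut φ z ≤ a :=
  csSup_le (insert_nonempty _ _) <| forall_mem_insert.2 ⟨ha, forall_mem_image.2 h⟩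

variable (φ z) in
lemma rationalCut_nonneg : 0 ≤ rationalCut φ z :=
  le_csSup (bddAbove_cutSet φ z) (mem_insert _ _)

variable (φ z) in
lemma rationalCut_le_one : rationalCut φ z ≤ 1 :=
  rationalCut_le_of_forall zero_le_one fun q _ ↦ by exact_mod_cast q.2.2.le

lemma le_rationalCut {q : Ioo (0 : ℚ) 1} (hq : φ q ≤ z) : (q : ℝ) ≤ rationalCut φ z :=
  le_csSup (bddAbove_cutSet φ z) (mem_insert_of_mem _ ⟨q, hq, rfl⟩)

lemma rationalCut_le (hφ : StrictMono φ) {q : Ioo (0 : ℚ) 1} (hz : z < φ q) :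
    rationalCut φ z ≤ q :=
  rationalCut_le_of_forall (by exact_mod_cast q.2.1.le) fun r hr ↦
    by exact_mod_cast (hφ.lt_iff_lt.1 (hr.trans_lt hz)).le

variable (φ) in
lemma monotone_rationalCut : Monotone (rationalCut φ) := fun _ _ h ↦
  rationalCut_le_of_forall (rationalCut_nonneg φ _) fun _ hq ↦ le_rationalCut (hq.trans h)

lemma rationalCut_eq_zero (h : ∀ q, z < φ q) : rationalCut φ z = 0 :=
  (rationalCut_le_of_forall le_rfl fun q hq ↦ absurd hq (h q).not_ge).antisymm
    (rationalCut_nonneg φ z)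

lemma rationalCut_eq_one (h : ∀ q, φ q < z) : rationalCut φ z = 1 := by
  refine (rationalCut_le_one φ z).antisymm (le_of_forall_lt fun c hc ↦ ?_)
  obtain ⟨q, hcq, -⟩ := exists_ratIoo_btwn (le_max_right c 0) (max_lt hc one_pos) le_rfl
  exact ((le_max_left c 0).trans_lt hcq).trans_le (le_rationalCut (h q).le)

lemma continuous_rationalCut [TopologicalSpace X] [OrderTopology X] (hφ : StrictMono φ) :
    Continuous (rationalCut φ) := by
  refine continuous_iff_continuousAt.2 fun z ↦ tendsto_order.2 ⟨fun a ha ↦ ?_, fun a ha ↦ ?_⟩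
  · rcases lt_or_ge a 0 with ha0 | ha0
    · exact Eventually.of_forall fun w ↦ ha0.trans_le (rationalCut_nonneg φ w)
    obtain ⟨r, hr, har⟩ := exists_lt_of_lt_csSup (insert_nonempty _ _) ha
    obtain rfl | ⟨q, hq, rfl⟩ := hr
    · exact absurd har ha0.not_gt
    beta_reduce at har
    obtain ⟨p, hap, hpq⟩ := exists_ratIoo_btwn ha0 har (by exact_mod_cast q.2.2.le)
    have hpz : φ p < z := (hφ (by exact_mod_cast hpq)).trans_le hq
    filter_upwards [Ioi_mem_nhds hpz] with w hw using hap.trans_le (le_rationalCut hw.le)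
  · rcases lt_or_ge 1 a with ha1 | ha1
    · exact Eventually.of_forall fun w ↦ (rationalCut_le_one φ w).trans_lt ha1
    obtain ⟨q, hzq, hqa⟩ := exists_ratIoo_btwn (rationalCut_nonneg φ z) ha ha1
    have hz : z < φ q := lt_of_not_ge fun h ↦ hzq.not_ge (le_rationalCut h)
    filter_upwards [Iio_mem_nhds hz] with w hw using (rationalCut_le hφ hw).trans_lt hqa

end RationalCut

section Separation

variable [TopologicalSpace X] [OrderTopology X]

lemma CovBy.exists_monotone_continuous {a b : X} (h : a ⋖ b) :
    ∃ f : X → ℝ, Continuous f ∧ Monotone f ∧ (∀ z, f z ∈ Icc (0 : ℝ) 1) ∧ f a = 0 ∧ f b = 1 := by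
  have hclopen : IsClopen (Ioi a) := ⟨h.Ioi_eq ▸ isClosed_Ici, isOpen_Ioi⟩
  refine ⟨(Ioi a).indicator 1, hclopen.continuous_indicator continuous_const,
    fun u v huv ↦ ?_, fun z ↦ ?_, by simp, by simp [h.lt]⟩
  · by_cases hu : a < u
    · simp [hu, hu.trans_le huv]
    · simp only [indicator_apply, mem_Ioi, hu, if_false]
      split_ifs <;> norm_num
  · simp only [indicator_apply, mem_Ioi]
    split_ifs <;> norm_num

lemma exists_monotone_continuous_of_denselyOrdered_Icc {x y : X} (hxy : x < y)
    [DenselyOrdered (Icc x y)] :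
    ∃ f : X → ℝ, Continuous f ∧ Monotone f ∧ (∀ z, f z ∈ Icc (0 : ℝ) 1) ∧ f x = 0 ∧ f y = 1 := by
  have : Nontrivial (Icc x y) :=
    ⟨⟨⟨x, left_mem_Icc.2 hxy.le⟩, ⟨y, right_mem_Icc.2 hxy.le⟩, fun h ↦ hxy.ne congr($h.1)⟩⟩
  obtain ⟨e⟩ := Order.embedding_from_countable_to_dense (Ioo (0 : ℚ) 1) (Icc x y)
  have hφ : StrictMono fun q ↦ (e q : X) := (Subtype.strictMono_coe _).comp e.strictMono
  refine ⟨rationalCut fun q ↦ (e q : X), continuous_rationalCut hφ, monotone_rationalCut _,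
    fun z ↦ ⟨rationalCut_nonneg _ z, rationalCut_le_one _ z⟩,
    rationalCut_eq_zero fun q ↦ ?_, rationalCut_eq_one fun q ↦ ?_⟩
  · obtain ⟨p, hp⟩ := exists_lt q
    exact (e p).2.1.trans_lt (hφ hp)
  · obtain ⟨p, hp⟩ := exists_gt q
    exact (hφ hp).trans_le (e p).2.2

end Separation

lemma denselyOrdered_Icc_of_forall_not_covBy {x y : X}
    (h : ∀ a b, x ≤ a → b ≤ y → ¬a ⋖ b) : DenselyOrdered (Icc x y) := by
  refine ⟨fun a b hab ↦ ?_⟩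
  obtain ⟨c, hac, hcb⟩ := (not_covBy_iff (show (a : X) < b from hab)).1 (h a b a.2.1 b.2.2)
  exact ⟨⟨c, a.2.1.trans hac.le, hcb.le.trans b.2.2⟩, hac, hcb⟩

lemma exists_monotone_continuous_of_lt [TopologicalSpace X] [OrderTopology X] {x y : X}
    (hxy : x < y) :
    ∃ f : X → ℝ, Continuous f ∧ Monotone f ∧ (∀ z, f z ∈ Icc (0 : ℝ) 1) ∧ f x = 0 ∧ f y = 1 := by
  by_cases hjump : ∃ a b, x ≤ a ∧ b ≤ y ∧ a ⋖ b
  · obtain ⟨a, b, hxa, hby, hab⟩ := hjump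
    obtain ⟨f, hf, hmono, hmem, hfa, hfb⟩ := hab.exists_monotone_continuous
    exact ⟨f, hf, hmono, hmem, le_antisymm (hfa ▸ hmono hxa) (hmem x).1,
      le_antisymm (hmem y).2 (hfb ▸ hmono hby)⟩
  · push Not at hjump
    have := denselyOrdered_Icc_of_forall_not_covBy hjump
    exact exists_monotone_continuous_of_denselyOrdered_Icc hxy

end

theorem exists_monotone_continuous_separating_general {X : Type*} [LinearOrder X]
    [TopologicalSpace X] [OrderTopology X] :
    ∀ x y : X, x ≠ y → ∃ f : X → ℝ, Continuous f ∧ Monotone f ∧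
      (∀ z, f z ∈ Set.Icc (0 : ℝ) 1) ∧ f x ≠ f y := by
  intro x y hne
  rcases hne.lt_or_gt with hxy | hyx
  · obtain ⟨f, hf, hmono, hmem, hx, hy⟩ := exists_monotone_continuous_of_lt hxy
    exact ⟨f, hf, hmono, hmem, by rw [hx, hy]; exact zero_ne_one⟩
  · obtain ⟨f, hf, hmono, hmem, hy, hx⟩ := exists_monotone_continuous_of_lt hyx
    exact ⟨f, hf, hmono, hmem, by rw [hx, hy]; exact one_ne_zero⟩

/-- (Nachbin) On a compact linearly ordered topological space, the continuous
order-preserving maps into `[0,1]` separate points. -/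
theorem exists_monotone_continuous_separating {X : Type*} [LinearOrder X]
    [TopologicalSpace X] [OrderTopology X] [CompactSpace X] :
    ∀ x y : X, x ≠ y → ∃ f : X → ℝ, Continuous f ∧ Monotone f ∧
      (∀ z, f z ∈ Set.Icc (0 : ℝ) 1) ∧ f x ≠ f y :=
  exists_monotone_continuous_separating_general
end

section
/- Let X be a compact linearly ordered topological space with minimum s, maximum t, and unique compatible uniformity μ. Then X is connected if and only if for every entourage α ∈ μ there exists a finite chain s = c₀ ≤ c₁ ≤ ⋯ ≤ cₙ = t such that (x,y) ∈ α for all x, y lying in the same interval [cᵢ, cᵢ₊₁]. -/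
/-!
For an entourage `α`, call `z` reachable from `a` if some `α`-connected net starting at `a` ends
at or above `z`. Every point has an `α`-small closed-interval neighbourhood, and reachability is
constant on it: if `y` in it is reachable through a net ending at `b < x`, then `[b, x]` lies in the
interval, so the net can be extended by `x`. Reachability is therefore locally constant, hence
constant on a connected space, and `t` is reachable from `s`.

Conversely, a clopen set `U ∋ s` of the compact space contains a uniform `V`-ball around each of
its points, so walking along a `V`-connected net from `s` to `t` never leaves `U`.
-/

open Set Filter Topology Uniformity

section Nets

variable {X : Type*} [LinearOrder X]

def IsConnectedNet (α : Set (X × X)) {n : ℕ} (c : Fin (n + 1) → X) (a b : X) : Prop :=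
  c 0 = a ∧ c (Fin.last n) = b ∧ Monotone c ∧
    ∀ i : Fin n, ∀ x y : X, x ∈ Icc (c i.castSucc) (c i.succ) →
      y ∈ Icc (c i.castSucc) (c i.succ) → (x, y) ∈ α

namespace IsConnectedNet

variable {α : Set (X × X)} {n : ℕ} {c : Fin (n + 1) → X} {a b : X}

lemma const (α : Set (X × X)) (a : X) : IsConnectedNet α (fun _ : Fin 1 => a) a a :=
  ⟨rfl, rfl, monotone_const, fun i => i.elim0⟩

lemma snoc (hc : IsConnectedNet α c a b) {d : X} (hbd : b ≤ d)
    (hsmall : Icc b d ×ˢ Icc b d ⊆ α) : IsConnectedNet α (Fin.snoc c d : Fin (n + 2) → X) a d := by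
  obtain ⟨h0, hlast, hmono, hsteps⟩ := hc
  refine ⟨?_, Fin.snoc_last _ _, ?_, ?_⟩
  · exact (Fin.snoc_castSucc (α := fun _ => X) (i := 0) ..).trans h0
  · refine Fin.monotone_iff_le_succ.2 (Fin.lastCases ?_ fun j => ?_)
    · simpa [hlast] using hbd
    · rw [Fin.succ_castSucc, Fin.snoc_castSucc, Fin.snoc_castSucc]
      exact hmono (Fin.castSucc_le_succ j)
  · refine Fin.lastCases ?_ fun j => ?_
    · simpa [hlast] using fun x y hx hy => hsmall (mk_mem_prod hx hy)
    · rw [Fin.succ_castSucc, Fin.snoc_castSucc, Fin.snoc_castSucc]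
      exact hsteps j

lemma Icc_subset (hc : IsConnectedNet α c a b) {U : Set X} (haU : a ∈ U)
    (hU : ∀ x ∈ U, ∀ y, (x, y) ∈ α → y ∈ U) : Icc a b ⊆ U := by
  obtain ⟨h0, hlast, hmono, hsteps⟩ := hc
  suffices ∀ i, Icc a (c i) ⊆ U from hlast ▸ this (Fin.last n)
  refine Fin.induction ?_ fun i ih => ?_
  · rw [h0, Icc_self, singleton_subset_iff]
    exact haU
  · have hci : c i.castSucc ∈ U := ih ⟨h0 ▸ hmono (Fin.zero_le _), le_rfl⟩
    refine (Icc_subset_Icc_union_Icc (b := c i.castSucc)).trans (union_subset ih ?_)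
    exact fun y hy => hU _ hci y (hsteps i _ _ ⟨le_rfl, hmono (Fin.castSucc_le_succ i)⟩ hy)

end IsConnectedNet

def NetReaches (α : Set (X × X)) (a z : X) : Prop :=
  ∃ (n : ℕ) (c : Fin (n + 1) → X) (b : X), IsConnectedNet α c a b ∧ z ≤ b

lemma NetReaches.of_mem_Icc {α : Set (X × X)} {a x y l r : X} (hsmall : Icc l r ×ˢ Icc l r ⊆ α)
    (hx : x ∈ Icc l r) (hy : y ∈ Icc l r) (h : NetReaches α a y) : NetReaches α a x := by
  obtain ⟨n, c, b, hc, hyb⟩ := h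
  rcases le_or_gt x b with hxb | hbx
  · exact ⟨n, c, b, hc, hxb⟩
  · have hsub : Icc b x ⊆ Icc l r := Icc_subset_Icc (hy.1.trans hyb) hx.2
    exact ⟨n + 1, _, x, hc.snoc hbx.le ((prod_mono hsub hsub).trans hsmall), le_rfl⟩

section Uniform

variable [UniformSpace X]

lemma exists_Icc_mem_nhds_prod_subset [OrderTopology X] {α : Set (X × X)} (hα : α ∈ 𝓤 X)
    (x : X) : ∃ l r, Icc l r ∈ 𝓝 x ∧ Icc l r ×ˢ Icc l r ⊆ α := by
  have hαx : α ∈ 𝓝 x ×ˢ 𝓝 x := by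
    rw [← nhds_prod_eq]
    exact nhds_le_uniformity x hα
  obtain ⟨U, hU, hUα⟩ := mem_prod_self_iff.1 hαx
  obtain ⟨l, r, -, hN, hNU⟩ := exists_Icc_mem_subset_of_mem_nhds hU
  exact ⟨l, r, hN, (prod_mono hNU hNU).trans hUα⟩

lemma isLocallyConstant_netReaches [OrderTopology X] {α : Set (X × X)} (hα : α ∈ 𝓤 X)
    (a : X) : IsLocallyConstant (NetReaches α a) := by
  refine (IsLocallyConstant.iff_eventually_eq _).2 fun x => ?_
  obtain ⟨l, r, hN, hsmall⟩ := exists_Icc_mem_nhds_prod_subset hα x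
  filter_upwards [hN] with y hy
  have hx : x ∈ Icc l r := mem_of_mem_nhds hN
  exact propext ⟨(·.of_mem_Icc hsmall hx hy), (·.of_mem_Icc hsmall hy hx)⟩

lemma exists_connectedNet_of_connectedSpace [OrderTopology X] [ConnectedSpace X]
    {α : Set (X × X)} (hα : α ∈ 𝓤 X) {s t : X} (ht : ∀ x, x ≤ t) :
    ∃ (n : ℕ) (c : Fin (n + 1) → X), IsConnectedNet α c s t := by
  have hreach : NetReaches α s t :=
    (isLocallyConstant_netReaches hα s).apply_eq_of_preconnectedSpace s t ▸
      ⟨0, _, s, IsConnectedNet.const α s, le_rfl⟩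
  obtain ⟨n, c, b, hc, htb⟩ := hreach
  exact ⟨n, c, (ht b).antisymm htb ▸ hc⟩

lemma IsClopen.eq_univ_of_forall_connectedNet [CompactSpace X] {s t : X} (hs : ∀ x, s ≤ x)
    (ht : ∀ x, x ≤ t) (hnet : ∀ α ∈ 𝓤 X, ∃ (n : ℕ) (c : Fin (n + 1) → X), IsConnectedNet α c s t)
    {U : Set X} (hU : IsClopen U) (hsU : s ∈ U) : U = univ := by
  obtain ⟨V, hV, -, hball⟩ := lebesgue_number_of_compact_open hU.isClosed.isCompact hU.isOpen
    subset_rfl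
  obtain ⟨n, c, hc⟩ := hnet V hV
  refine eq_univ_of_forall fun x => hc.Icc_subset hsU (fun y hy z hyz => hball y hy hyz) ?_
  exact ⟨hs x, ht x⟩

end Uniform

end Nets

/-- A compact LOTS `X` with minimum `s`, maximum `t` and (unique compatible) uniformity `𝓤 X`
is connected iff for every entourage `α` there is an `α`-connected net: a finite monotone
chain `s = c₀ ≤ c₁ ≤ ⋯ ≤ cₙ = t` such that any two points of a common interval
`[cᵢ, cᵢ₊₁]` are `α`-close. -/
theorem connected_iff_exists_connected_net {X : Type*} [UniformSpace X] [LinearOrder X]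
    [OrderTopology X] [CompactSpace X] {s t : X}
    (hs : ∀ x, s ≤ x) (ht : ∀ x, x ≤ t) :
    ConnectedSpace X ↔
      ∀ α ∈ uniformity X, ∃ (n : ℕ) (c : Fin (n + 1) → X),
        c 0 = s ∧ c (Fin.last n) = t ∧ Monotone c ∧
        ∀ i : Fin n, ∀ x y : X,
          x ∈ Set.Icc (c i.castSucc) (c i.succ) →
          y ∈ Set.Icc (c i.castSucc) (c i.succ) → (x, y) ∈ α := by
  refine ⟨fun _ α hα => exists_connectedNet_of_connectedSpace hα ht, fun hnet => ?_⟩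
  refine connectedSpace_iff_clopen.2 ⟨⟨s⟩, fun U hU => ?_⟩
  by_cases hsU : s ∈ U
  · exact Or.inr (hU.eq_univ_of_forall_connectedNet hs ht hnet hsU)
  · exact Or.inl (compl_univ_iff.1 (hU.compl.eq_univ_of_forall_connectedNet hs ht hnet hsU))
end

section
/- Let X be a compact connected linearly ordered topological space such that for every pair a < b in X the group H₊([a,b]) of order-preserving homeomorphisms of [a,b] is nontrivial. Then for the topological group G = H₊(X) with the compact-open topology, the Zariski topology equals the compact-open topology; in particular the compact-open topology is the smallest Hausdorff group topology on G (G is a-minimal). -/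
def zariskiSubbase (G : Type*) [Group G] : Set (Set G) :=
  {S | ∃ (n : ℕ) (ε : Fin n → Bool) (g : Fin n → G),
    S = {x : G | (List.ofFn (fun i : Fin n => (if ε i then x else x⁻¹) * g i)).prod ≠ 1}}

/-- The Zariski topology on a group. -/
def zariskiTopology (G : Type*) [Group G] : TopologicalSpace G :=
  TopologicalSpace.generateFrom (zariskiSubbase G)

/-- The group of self-homeomorphisms (`f * g` acts by `g` then `f`). -/
instance homeoGroup {X : Type*} [TopologicalSpace X] : Group (X ≃ₜ X) where
  mul f g := g.trans f
  one := Homeomorph.refl X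
  inv := Homeomorph.symm
  mul_assoc _ _ _ := rfl
  one_mul _ := Homeomorph.ext fun _ => rfl
  mul_one _ := Homeomorph.ext fun _ => rfl
  inv_mul_cancel f := Homeomorph.ext fun x => f.symm_apply_apply x

/-- The compact-open topology on the homeomorphism group, induced from `C(X, X)`. -/
instance homeoCompactOpen {X : Type*} [TopologicalSpace X] : TopologicalSpace (X ≃ₜ X) :=
  TopologicalSpace.induced (fun f => (f : C(X, X))) ContinuousMap.compactOpen

/-!
Evaluation `f ↦ f x` is continuous for the compact-open topology; conversely, for monotone
homeomorphisms of a densely ordered space, continuity of all evaluations already gives joint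
continuity of `(f, x) ↦ f x`, hence continuity into `C(X, X)`. So on `H₊(X)` the compact-open
topology is the topology of pointwise convergence, and `H₊(X)` is a Hausdorff topological group.

The sets `{f | a < f x}` and `{f | f x < b}` are Zariski open: for `g` with `a < g x` pick `c` with
`a < g c`, `c < x`, a bump `k` supported in `[c, x]` and a bump `h` supported in `(g c, g x)` such
that `g k g⁻¹` moves a point of the support of `h` off that support. Then `⁅f k f⁻¹, h⁆ ≠ 1` is a
Zariski-open condition holding at `g`, and it forces `f [c, x]` to meet `(g c, g x)`, i.e.
`a < f x`. As the Zariski topology is coarser than every Hausdorff group topology, it equals the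
compact-open topology, which is therefore the coarsest one.
-/

open Set Topology

section Zariski

variable {G : Type*} [Group G]

theorem isOpen_zariskiTopology_setOf_not_commute_conj (k h : G) :
    IsOpen[zariskiTopology G] {f | ¬Commute (f * k * f⁻¹) h} := by
  refine TopologicalSpace.isOpen_generateFrom_of_mem
    ⟨4, ![true, false, true, false], ![k, h, k⁻¹, h⁻¹], ?_⟩
  ext f
  simp [List.ofFn_succ, ← commutatorElement_eq_one_iff_commute, commutatorElement_def, mul_assoc]

theorem isOpen_zariskiTopology_of_forall_not_commute_conj {U : Set G}
    (hU : ∀ g ∈ U, ∃ k h : G, ¬Commute (g * k * g⁻¹) h ∧ {f | ¬Commute (f * k * f⁻¹) h} ⊆ U) :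
    IsOpen[zariskiTopology G] U := by
  refine (@isOpen_iff_forall_mem_open _ (zariskiTopology G) _).2 fun g hg => ?_
  obtain ⟨k, h, hg', hsub⟩ := hU g hg
  exact ⟨_, hsub, isOpen_zariskiTopology_setOf_not_commute_conj k h, hg'⟩

theorem le_zariskiTopology [TopologicalSpace G] [IsTopologicalGroup G] [T1Space G] :
    ‹TopologicalSpace G› ≤ zariskiTopology G := by
  refine le_generateFrom ?_
  rintro _ ⟨n, ε, g, rfl⟩
  refine isClosed_singleton.isOpen_compl.preimage ?_
  simp only [List.ofFn_eq_map]
  refine continuous_list_prod _ fun i _ => ?_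
  cases ε i <;> simp only [Bool.false_eq_true, if_false, if_true] <;> fun_prop

end Zariski

namespace Homeomorph

section Support

variable {X : Type*} [TopologicalSpace X] {k h : X ≃ₜ X} {S T : Set X}

theorem apply_mem_of_forall_notMem (hk : ∀ x ∉ S, k x = x) {x : X} (hx : x ∈ S) : k x ∈ S := by
  by_contra hkx
  rw [k.injective (hk _ hkx)] at hkx
  exact hkx hx

theorem conj_apply_of_notMem_image (f : X ≃ₜ X) (hk : ∀ x ∉ S, k x = x) :
    ∀ y ∉ f '' S, (f * k * f⁻¹) y = y := fun y hy => by
  have hfy : f.symm y ∉ S := fun h => hy ⟨_, h, f.apply_symm_apply y⟩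
  simp [hk _ hfy]

theorem commute_of_disjoint (hk : ∀ x ∉ S, k x = x) (hh : ∀ x ∉ T, h x = x)
    (hST : Disjoint S T) : Commute k h := by
  have key : ∀ {k h : X ≃ₜ X} {S T : Set X}, (∀ x ∉ S, k x = x) → (∀ x ∉ T, h x = x) →
      Disjoint S T → ∀ x ∈ S, k (h x) = h (k x) := fun hk hh hST x hx => by
    rw [hh x (hST.notMem_of_mem_left hx),
      hh _ (hST.notMem_of_mem_left (apply_mem_of_forall_notMem hk hx))]
  ext x
  simp only [mul_apply]
  by_cases hS : x ∈ S
  · exact key hk hh hST x hS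
  by_cases hT : x ∈ T
  · exact (key hh hk hST.symm x hT).symm
  rw [hh x hT, hk x hS, hh x hT]

theorem not_commute_of_apply_ne (g : X ≃ₜ X) (hh : ∀ x ∉ T, h x = x) {s : X} (hs : h s ≠ s)
    (hsT : s ∉ g '' T) : ¬Commute g h := fun hc => by
  have hconj : g * h * g⁻¹ = h := by rw [hc.eq, mul_inv_cancel_right]
  exact hs (hconj ▸ conj_apply_of_notMem_image g hh s hsT)

end Support

section Order

variable {X : Type*} [LinearOrder X] [TopologicalSpace X] {f : X ≃ₜ X}

theorem lt_symm_apply_iff (hf : Monotone f) {x y : X} : x < f.symm y ↔ f x < y := by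
  conv_rhs => rw [← f.apply_symm_apply y]
  exact (hf.strictMono_of_injective f.injective).lt_iff_lt.symm

theorem symm_apply_lt_iff (hf : Monotone f) {x y : X} : f.symm y < x ↔ y < f x := by
  conv_rhs => rw [← f.apply_symm_apply y]
  exact (hf.strictMono_of_injective f.injective).lt_iff_lt.symm

theorem monotone_symm (hf : Monotone f) : Monotone f.symm := fun x y hxy =>
  not_lt.1 fun h => (not_lt.2 hxy) (by rwa [symm_apply_lt_iff hf, apply_symm_apply] at h)

end Order

section CompactOpen

variable {X : Type*} [TopologicalSpace X]

theorem continuous_toContinuousMap : Continuous fun f : X ≃ₜ X => (f : C(X, X)) :=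
  continuous_induced_dom

theorem continuous_apply_const (x : X) : Continuous fun f : X ≃ₜ X => f x :=
  (continuous_eval_const (F := C(X, X)) x).comp continuous_toContinuousMap

instance [T2Space X] : T2Space (X ≃ₜ X) :=
  .of_injective_continuous (fun _ _ h => Homeomorph.ext (ContinuousMap.ext_iff.1 h))
    continuous_toContinuousMap

variable [LinearOrder X] [OrderTopology X] {S : Type*} [TopologicalSpace S] {φ : S → X ≃ₜ X}

theorem continuous_symm_apply (hmono : ∀ s, Monotone (φ s))
    (hφ : ∀ x, Continuous fun s => φ s x) (x : X) : Continuous fun s => (φ s).symm x := by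
  refine OrderTopology.continuous_iff.2 fun c => ⟨?_, ?_⟩
  · have : (fun s => (φ s).symm x) ⁻¹' Ioi c = (fun s => φ s c) ⁻¹' Iio x := by
      ext s; exact lt_symm_apply_iff (hmono s)
    exact this ▸ isOpen_Iio.preimage (hφ c)
  · have : (fun s => (φ s).symm x) ⁻¹' Iio c = (fun s => φ s c) ⁻¹' Ioi x := by
      ext s; exact symm_apply_lt_iff (hmono s)
    exact this ▸ isOpen_Ioi.preimage (hφ c)

theorem continuous_uncurry_apply [DenselyOrdered X] (hmono : ∀ s, Monotone (φ s))
    (hφ : ∀ x, Continuous fun s => φ s x) : Continuous fun p : S × X => φ p.1 p.2 := by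
  refine continuous_iff_continuousAt.2 fun ⟨s₀, x₀⟩ =>
    tendsto_order.2 ⟨fun c hc => ?_, fun c hc => ?_⟩
  · obtain ⟨y, hcy, hyx⟩ := exists_between ((symm_apply_lt_iff (hmono s₀)).2 hc)
    have hy : ∀ᶠ s in 𝓝 s₀, c < φ s y :=
      ((hφ y).tendsto s₀).eventually_const_lt ((symm_apply_lt_iff (hmono s₀)).1 hcy)
    filter_upwards [hy.prod_nhds (Ioi_mem_nhds hyx)] with p hp
    exact hp.1.trans_le (hmono p.1 hp.2.le)
  · obtain ⟨y, hxy, hyc⟩ := exists_between ((lt_symm_apply_iff (hmono s₀)).2 hc)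
    have hy : ∀ᶠ s in 𝓝 s₀, φ s y < c :=
      ((hφ y).tendsto s₀).eventually_lt_const ((lt_symm_apply_iff (hmono s₀)).1 hyc)
    filter_upwards [hy.prod_nhds (Iio_mem_nhds hxy)] with p hp
    exact (hmono p.1 hp.2.le).trans_lt hp.1

theorem continuous_of_continuous_apply [DenselyOrdered X] (hmono : ∀ s, Monotone (φ s))
    (hφ : ∀ x, Continuous fun s => φ s x) : Continuous φ :=
  continuous_induced_rng.2 <|
    ContinuousMap.continuous_of_continuous_uncurry _ (continuous_uncurry_apply hmono hφ)

end CompactOpen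

end Homeomorph

section Bumps

open Homeomorph

variable {X : Type*} [LinearOrder X] [TopologicalSpace X] [OrderTopology X]

theorem exists_extend_Icc {a b : X} (e : Icc a b ≃ₜ Icc a b) (he : Monotone e) :
    ∃ k : X ≃ₜ X, Monotone k ∧ (∀ x ∉ Icc a b, k x = x) ∧ ∀ x : Icc a b, k x = e x := by
  set F : X → X := fun x => if hx : x ∈ Icc a b then e ⟨x, hx⟩ else x with hF
  have hes := he.strictMono_of_injective e.injective
  have hFmono : StrictMono F := by
    intro x y hxy
    by_cases hx : x ∈ Icc a b <;> by_cases hy : y ∈ Icc a b <;>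
      simp only [hF, dif_pos, dif_neg, hx, hy, not_false_eq_true]
    · exact hes (Subtype.mk_lt_mk.2 hxy)
    · exact (e ⟨x, hx⟩).2.2.trans_lt (lt_of_not_ge fun hyb => hy ⟨hx.1.trans hxy.le, hyb⟩)
    · exact (lt_of_not_ge fun hax => hx ⟨hax, hxy.le.trans hy.2⟩).trans_le (e ⟨y, hy⟩).2.1
    · exact hxy
  have hFsurj : Function.Surjective F := by
    intro z
    by_cases hz : z ∈ Icc a b
    · refine ⟨e.symm ⟨z, hz⟩, ?_⟩
      simp only [hF, dif_pos (e.symm ⟨z, hz⟩).2, Subtype.coe_eta, apply_symm_apply]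
    · exact ⟨z, by simp only [hF, dif_neg hz]⟩
  refine ⟨(hFmono.orderIsoOfSurjective F hFsurj).toHomeomorph, ?_, fun x hx => ?_, fun x => ?_⟩ <;>
    simp only [OrderIso.coe_toHomeomorph, StrictMono.coe_orderIsoOfSurjective]
  · exact hFmono.monotone
  · simp only [hF, dif_neg hx]
  · simp only [hF, dif_pos x.2, Subtype.coe_eta]

variable (hA : ∀ a b : X, a < b →
  ∃ h : Set.Icc a b ≃ₜ Set.Icc a b, Monotone ⇑h ∧ h ≠ Homeomorph.refl (Set.Icc a b))
include hA

theorem exists_bump {u v : X} (huv : u < v) :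
    ∃ k : X ≃ₜ X, Monotone k ∧ (∀ x ∉ Icc u v, k x = x) ∧ ∃ q, q < k q := by
  obtain ⟨e, he, hne⟩ := hA u v huv
  obtain ⟨k, hk, hkfix, hke⟩ := exists_extend_Icc e he
  obtain ⟨p, hp⟩ : ∃ p, e p ≠ p := not_forall.1 fun h => hne (Homeomorph.ext h)
  have hkp : k p ≠ p := by rw [hke]; exact Subtype.coe_injective.ne hp
  rcases hkp.lt_or_gt with hlt | hgt
  · refine ⟨k⁻¹, monotone_symm hk, fun x hx => k.symm_apply_eq.2 (hkfix x hx).symm, k p, ?_⟩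
    simpa using hlt
  · exact ⟨k, hk, hkfix, p, hgt⟩

theorem exists_not_commute_conj [DenselyOrdered X] {g : X ≃ₜ X} (hg : Monotone g) {u v : X}
    (huv : u < v) :
    ∃ k h : X ≃ₜ X, Monotone k ∧ Monotone h ∧ (∀ x ∉ Icc u v, k x = x) ∧
      (∀ x ∉ Ioo (g u) (g v), h x = x) ∧ ¬Commute (g * k * g⁻¹) h := by
  obtain ⟨k, hk, hkfix, q, hq⟩ := exists_bump hA huv
  have hqI : q ∈ Icc u v := by_contra fun hout => hq.ne (hkfix q hout).symm
  have hkqI : k q ∈ Icc u v := apply_mem_of_forall_notMem hkfix hqI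
  obtain ⟨u', hqu', hu'kq⟩ := exists_between ((hg.strictMono_of_injective g.injective) hq)
  obtain ⟨v', hu'v', hv'kq⟩ := exists_between hu'kq
  obtain ⟨h, hh, hhfix, s, hs⟩ := exists_bump hA hu'v'
  have hsI : s ∈ Icc u' v' := by_contra fun hout => hs.ne (hhfix s hout).symm
  refine ⟨k, h, hk, hh, hkfix, fun x hx => hhfix x fun hx' => hx ⟨?_, ?_⟩,
    not_commute_of_apply_ne _ hhfix hs.ne' ?_⟩
  · exact (hg hqI.1).trans_lt (hqu'.trans_le hx'.1)
  · exact (hx'.2.trans_lt hv'kq).trans_le (hg hkqI.2)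
  · -- `g k g⁻¹` pushes `[u', v']` above `g (k q) > v'`, hence off the moved point `s`
    rintro ⟨t, ht, hts⟩
    have hqt : q < g.symm t := (lt_symm_apply_iff hg).2 (hqu'.trans_le ht.1)
    have : g (k q) < s := by
      rw [← hts]
      exact (hg.strictMono_of_injective g.injective) ((hk.strictMono_of_injective k.injective) hqt)
    exact not_lt.2 (hsI.2.trans hv'kq.le) this

end Bumps

section MonotoneSubgroup

open Homeomorph

variable {X : Type*} [LinearOrder X] [TopologicalSpace X] [OrderTopology X] [DenselyOrdered X]

theorem isTopologicalGroup_of_forall_monotone (H : Subgroup (X ≃ₜ X))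
    (hmono : ∀ f ∈ H, Monotone f) : IsTopologicalGroup H := by
  have hmono' : ∀ f : H, Monotone (f : X ≃ₜ X) := fun f => hmono f f.2
  have hφ : ∀ x, Continuous fun f : H => (f : X ≃ₜ X) x :=
    fun x => (continuous_apply_const x).comp continuous_subtype_val
  have heval := continuous_uncurry_apply hmono' hφ
  refine { continuous_mul := ?_, continuous_inv := ?_ }
  · exact (continuous_of_continuous_apply (fun p : H × H => hmono' (p.1 * p.2)) fun x =>
      heval.comp (continuous_fst.prodMk ((hφ x).comp continuous_snd))).subtype_mk _
  · exact (continuous_of_continuous_apply (fun f => hmono' f⁻¹)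
      (continuous_symm_apply hmono' hφ)).subtype_mk _

variable (hA : ∀ a b : X, a < b →
  ∃ h : Set.Icc a b ≃ₜ Set.Icc a b, Monotone ⇑h ∧ h ≠ Homeomorph.refl (Set.Icc a b))
  {H : Subgroup (X ≃ₜ X)} (hH : ∀ f, f ∈ H ↔ Monotone f)
include hA hH

theorem exists_not_commute_conj_in_subgroup (g : H) {u v : X} (huv : u < v) :
    ∃ k h : H, ¬Commute (g * k * g⁻¹) h ∧ ∀ f : H, ¬Commute (f * k * f⁻¹) h →
      ¬Disjoint ((f : X ≃ₜ X) '' Icc u v) (Ioo ((g : X ≃ₜ X) u) ((g : X ≃ₜ X) v)) := by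
  obtain ⟨k, h, hk, hh, hkfix, hhfix, hnc⟩ := exists_not_commute_conj hA ((hH g).1 g.2) huv
  refine ⟨⟨k, (hH k).2 hk⟩, ⟨h, (hH h).2 hh⟩, fun hc => hnc (hc.map H.subtype),
    fun f hf hdisj => hf ?_⟩
  exact Commute.of_map (f := H.subtype) H.subtype_injective
    (commute_of_disjoint (conj_apply_of_notMem_image _ hkfix) hhfix hdisj)

theorem isOpen_zariskiTopology_setOf_lt_apply (a x : X) :
    IsOpen[zariskiTopology H] {f : H | a < (f : X ≃ₜ X) x} := by
  refine isOpen_zariskiTopology_of_forall_not_commute_conj fun g (hg : a < (g : X ≃ₜ X) x) => ?_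
  have hgm := (hH g).1 g.2
  obtain ⟨c, hac, hcx⟩ := exists_between ((symm_apply_lt_iff hgm).2 hg)
  obtain ⟨k, h, hnc, hdisj⟩ := exists_not_commute_conj_in_subgroup hA hH g hcx
  refine ⟨k, h, hnc, fun f hf => not_le.1 fun hfx => hdisj f hf ?_⟩
  refine Set.disjoint_left.2 ?_
  rintro _ ⟨y, hy, rfl⟩ hy'
  exact not_lt.2 (((hH f).1 f.2 hy.2).trans hfx) (((symm_apply_lt_iff hgm).1 hac).trans hy'.1)

theorem isOpen_zariskiTopology_setOf_apply_lt (x b : X) :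
    IsOpen[zariskiTopology H] {f : H | (f : X ≃ₜ X) x < b} := by
  refine isOpen_zariskiTopology_of_forall_not_commute_conj fun g (hg : (g : X ≃ₜ X) x < b) => ?_
  have hgm := (hH g).1 g.2
  obtain ⟨c, hxc, hcb⟩ := exists_between ((lt_symm_apply_iff hgm).2 hg)
  obtain ⟨k, h, hnc, hdisj⟩ := exists_not_commute_conj_in_subgroup hA hH g hxc
  refine ⟨k, h, hnc, fun f hf => not_le.1 fun hfx => hdisj f hf ?_⟩
  refine Set.disjoint_left.2 ?_
  rintro _ ⟨y, hy, rfl⟩ hy'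
  exact not_lt.2 (hfx.trans ((hH f).1 f.2 hy.1)) (hy'.2.trans ((lt_symm_apply_iff hgm).1 hcb))

theorem zariskiTopology_le_compactOpen : zariskiTopology H ≤ instTopologicalSpaceSubtype := by
  rw [← continuous_id_iff_le]
  refine continuous_induced_rng.2 ?_
  refine @continuous_of_continuous_apply X _ _ _ H (zariskiTopology H) _ _
    (fun f => (hH _).1 f.2) fun x => ?_
  exact @OrderTopology.continuous_iff X H _ _ _ (zariskiTopology H) _ |>.2 fun c =>
    ⟨isOpen_zariskiTopology_setOf_lt_apply hA hH c x,
      isOpen_zariskiTopology_setOf_apply_lt hA hH x c⟩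

end MonotoneSubgroup

theorem orderHomeoGroup_aMinimal_general {X : Type*} [LinearOrder X] [TopologicalSpace X]
    [OrderTopology X] [ConnectedSpace X]
    (hA : ∀ a b : X, a < b →
      ∃ h : Set.Icc a b ≃ₜ Set.Icc a b, Monotone ⇑h ∧ h ≠ Homeomorph.refl (Set.Icc a b))
    (H : Subgroup (X ≃ₜ X)) (hH : H.carrier = {f : X ≃ₜ X | Monotone ⇑f}) :
    zariskiTopology ↥H = (instTopologicalSpaceSubtype : TopologicalSpace ↥H) ∧
    ∀ t : TopologicalSpace ↥H, @T2Space ↥H t → @IsTopologicalGroup ↥H t _ →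
      t ≤ (instTopologicalSpaceSubtype : TopologicalSpace ↥H) := by
  have : DenselyOrdered X := denselyOrdered_of_preconnectedSpace
  have hmem : ∀ f, f ∈ H ↔ Monotone f := fun f => by rw [← Subgroup.mem_carrier, hH]; rfl
  have := isTopologicalGroup_of_forall_monotone H fun f hf => (hmem f).1 hf
  have hZ := le_antisymm (zariskiTopology_le_compactOpen hA hmem) le_zariskiTopology
  refine ⟨hZ, fun t _ htg => hZ ▸ @le_zariskiTopology H _ t htg inferInstance⟩

/-- Let `X` be a compact connected LOTS such that for every `a < b` the group of
order-preserving homeomorphisms of `[a,b]` is nontrivial.  Then on the group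
`G = H₊(X)` of order-preserving homeomorphisms of `X` (here realized as the subgroup `H`
of the homeomorphism group with carrier the monotone homeomorphisms, carrying the
subspace compact-open topology) the Zariski topology coincides with the compact-open
topology, and the compact-open topology is the smallest Hausdorff group topology on `G`
(i.e. `G` is `a`-minimal): every Hausdorff group topology on `G` is finer. -/
theorem orderHomeoGroup_aMinimal {X : Type*} [LinearOrder X] [TopologicalSpace X]
    [OrderTopology X] [CompactSpace X] [ConnectedSpace X]
    (hA : ∀ a b : X, a < b →
      ∃ h : Set.Icc a b ≃ₜ Set.Icc a b, Monotone ⇑h ∧ h ≠ Homeomorph.refl (Set.Icc a b))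
    (H : Subgroup (X ≃ₜ X)) (hH : H.carrier = {f : X ≃ₜ X | Monotone ⇑f}) :
    zariskiTopology ↥H = (instTopologicalSpaceSubtype : TopologicalSpace ↥H) ∧
    ∀ t : TopologicalSpace ↥H, @T2Space ↥H t → @IsTopologicalGroup ↥H t _ →
      t ≤ (instTopologicalSpaceSubtype : TopologicalSpace ↥H) :=
  orderHomeoGroup_aMinimal_general hA H hH
end

section
/- Let X be a compact connected linearly ordered topological space such that for every pair a < b there exist c, d with a ≤ c < d ≤ b and [c,d] separable. Then the groups H₊(X) and H(X), with the compact-open topology, are a-minimal. -/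
open Set Filter Topology

/-!
Let `τ` be a Hausdorff group topology on a group `G` of homeomorphisms of `X` containing all
increasing ones. If `σ, ρ ∈ G` do not commute and are supported in `[c, d]`, then the `g` for which
`g σ g⁻¹` does not commute with `ρ` form a `τ`-neighbourhood of `1`; as `g σ g⁻¹` is supported in
`g [c, d]`, every such `g` moves some point of `(c, d)` into `(c, d)`. Separability provides such
pairs inside every interval: a countable dense subset of `(c, d)` is order-isomorphic to `ℚ`, and
the non-commuting automorphisms `q ↦ q + 1` and `q ↦ 2 q` extend to `X`. Hence elements `τ`-close
to `1` are increasing and move each point only a little, so the action `G × X → X` is continuous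
at every `(1, x)`, hence everywhere, and `τ` is finer than the compact-open topology.
-/

theorem Homeomorph.commute_conj_of_mapsTo_compl {X : Type*} [TopologicalSpace X]
    {σ ρ g : X ≃ₜ X} {s : Set X} (hσ : ∀ x ∉ s, σ x = x) (hρ : ∀ x ∉ s, ρ x = x)
    (hg : MapsTo g s sᶜ) : Commute (g * σ * g⁻¹) ρ := by
  have hdisj : Equiv.Perm.Disjoint (g * σ * g⁻¹).toEquiv ρ.toEquiv := by
    intro x
    by_cases hx : x ∈ s
    · have : g.symm x ∉ s := fun h => hg h (by simpa using hx)
      left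
      change g (σ (g.symm x)) = x
      rw [hσ _ this, g.apply_symm_apply]
    · exact Or.inr (hρ x hx)
  exact Homeomorph.ext fun x => Equiv.congr_fun hdisj.commute.eq x

theorem eventually_not_commute_conj {G : Type*} [Group G] [TopologicalSpace G]
    [IsTopologicalGroup G] [T2Space G] {a b : G} (h : ¬Commute a b) :
    ∀ᶠ g in 𝓝 (1 : G), ¬Commute (g * a * g⁻¹) b := by
  have hclosed : IsClosed {g : G | g * a * g⁻¹ * b = b * (g * a * g⁻¹)} :=
    isClosed_eq (by fun_prop) (by fun_prop)
  exact hclosed.isOpen_compl.mem_nhds (by simpa [Commute, SemiconjBy] using h)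

theorem continuous_apply_of_tendsto_nhds_one {G X : Type*} [Group G] [TopologicalSpace G]
    [IsTopologicalGroup G] [TopologicalSpace X] (π : G →* (X ≃ₜ X))
    (h : ∀ x, Tendsto (fun p : G × X => π p.1 p.2) (𝓝 1 ×ˢ 𝓝 x) (𝓝 x)) :
    Continuous fun p : G × X => π p.1 p.2 := by
  refine continuous_iff_continuousAt.2 fun ⟨g₀, x₀⟩ => ?_
  have hshift : Tendsto (fun p : G × X => (p.1 * g₀⁻¹, π g₀ p.2)) (𝓝 (g₀, x₀))
      (𝓝 1 ×ˢ 𝓝 (π g₀ x₀)) := by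
    rw [← nhds_prod_eq, ← mul_inv_cancel g₀]
    exact Continuous.tendsto (by fun_prop) _
  refine ((h _).comp hshift).congr fun p => ?_
  change π (p.1 * g₀⁻¹) (π g₀ p.2) = π p.1 p.2
  rw [map_mul, map_inv]
  exact congrArg (π p.1) ((π g₀).symm_apply_apply p.2)

section LinearOrder

variable {X : Type*} [LinearOrder X]

theorem monotoneOn_ofSubtype_union_compl_Ioo {c d : X} {S : Set X} [DecidablePred (· ∈ S)]
    (hSsub : S ⊆ Ioo c d) (φ : S ≃o S) :
    MonotoneOn (Equiv.Perm.ofSubtype φ.toEquiv) (S ∪ (Ioo c d)ᶜ) := by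
  intro x hx y hy hxy
  by_cases hxS : x ∈ S <;> by_cases hyS : y ∈ S <;>
    simp only [Equiv.Perm.ofSubtype_apply_of_mem, Equiv.Perm.ofSubtype_apply_of_not_mem,
      hxS, hyS, not_false_eq_true, OrderIso.coe_toEquiv]
  · exact φ.monotone (Subtype.mk_le_mk.2 hxy)
  · have hyd : d ≤ y := by
      by_contra hyd
      exact (hy.resolve_left hyS) ⟨(hSsub hxS).1.trans_le hxy, not_le.1 hyd⟩
    exact ((hSsub (φ ⟨x, hxS⟩).2).2.trans_le hyd).le
  · have hxc : x ≤ c := by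
      by_contra hxc
      exact (hx.resolve_left hxS) ⟨not_le.1 hxc, hxy.trans_lt (hSsub hyS).2⟩
    exact (hxc.trans_lt (hSsub (φ ⟨y, hyS⟩).2).1).le
  · exact hxy

variable [TopologicalSpace X] [OrderTopology X]

theorem exists_isLUB_of_compactSpace [CompactSpace X] {s : Set X} (hs : s.Nonempty) :
    ∃ x, IsLUB s x := by
  obtain ⟨x, -, hx⟩ := isClosed_closure.isCompact.exists_isLUB hs.closure
  exact ⟨x, (isLUB_congr (upperBounds_closure s)).1 hx⟩

variable (X) in
noncomputable abbrev conditionallyCompleteLinearOrderOfCompactSpace [CompactSpace X]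
    [Nonempty X] : ConditionallyCompleteLinearOrder X :=
  letI : SupSet X := ⟨fun s => Classical.epsilon (IsLUB s)⟩
  { conditionallyCompleteLatticeOfLatticeOfsSup X fun _ _ hs =>
      Classical.epsilon_spec (exists_isLUB_of_compactSpace hs), ‹LinearOrder X› with
    csSup_of_not_bddAbove := fun s hs => absurd (isCompact_univ.bddAbove.mono (subset_univ s)) hs
    csInf_of_not_bddBelow := fun s hs => absurd (isCompact_univ.bddBelow.mono (subset_univ s)) hs }

theorem exists_countable_subset_Ioo_subset_closure {c d : X}
    [TopologicalSpace.SeparableSpace (Icc c d)] :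
    ∃ S ⊆ Ioo c d, S.Countable ∧ Ioo c d ⊆ closure S := by
  obtain ⟨C, hC, hCd⟩ := TopologicalSpace.IsSeparable.of_subtype (Icc c d)
  refine ⟨C ∩ Ioo c d, inter_subset_right, hC.mono inter_subset_left, fun x hx => ?_⟩
  rw [inter_comm]
  exact isOpen_Ioo.inter_closure ⟨hx, hCd (Ioo_subset_Icc_self hx)⟩

variable [DenselyOrdered X]

theorem exists_mem_Ioo_of_Ioo_subset_closure {c d x y : X} {S : Set X}
    (hS : Ioo c d ⊆ closure S) (hcx : c ≤ x) (hxy : x < y) (hyd : y ≤ d) :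
    ∃ s ∈ S, s ∈ Ioo x y := by
  obtain ⟨z, hz⟩ := nonempty_Ioo.2 hxy
  obtain ⟨s, hs, hsS⟩ := mem_closure_iff.1 (hS ⟨hcx.trans_lt hz.1, hz.2.trans_le hyd⟩) _
    isOpen_Ioo hz
  exact ⟨s, hsS, hs⟩

theorem nonempty_orderIso_rat_of_Ioo_subset_closure {c d : X} (hcd : c < d) {S : Set X}
    (hSsub : S ⊆ Ioo c d) (hSc : S.Countable) (hS : Ioo c d ⊆ closure S) :
    Nonempty (ℚ ≃o S) := by
  have hbetween {x y : X} (hcx : c ≤ x) (hxy : x < y) (hyd : y ≤ d) : ∃ s : S, x < s ∧ s < y :=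
    let ⟨s, hs, hxs⟩ := exists_mem_Ioo_of_Ioo_subset_closure hS hcx hxy hyd
    ⟨⟨s, hs⟩, hxs⟩
  have : Countable S := hSc.to_subtype
  have : Nonempty S := (hbetween le_rfl hcd le_rfl).nonempty
  have : DenselyOrdered S :=
    ⟨fun a b hab => hbetween (hSsub a.2).1.le hab (hSsub b.2).2.le⟩
  have : NoMinOrder S := ⟨fun a => (hbetween le_rfl (hSsub a.2).1 (hSsub a.2).2.le).imp
    fun _ h => h.2⟩
  have : NoMaxOrder S := ⟨fun a => (hbetween (hSsub a.2).1.le (hSsub a.2).2 le_rfl).imp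
    fun _ h => h.1⟩
  exact Order.iso_of_countable_dense ℚ S

theorem Monotone.eq_id_of_eqOn_dense {h : X → X} (hm : Monotone h) {T : Set X} (hT : Dense T)
    (hid : EqOn h id T) : h = id := by
  funext x
  by_contra hne
  rcases lt_or_gt_of_ne (hne : h x ≠ x) with hlt | hlt
  · obtain ⟨t, ht, hxt⟩ := hT.exists_between hlt
    exact (hm hxt.2.le).not_gt (hid ht ▸ hxt.1)
  · obtain ⟨t, ht, hxt⟩ := hT.exists_between hlt
    exact (hm hxt.1.le).not_gt (hid ht ▸ hxt.2)

end LinearOrder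

def HasSeparableSubintervals (X : Type*) [LinearOrder X] [TopologicalSpace X] : Prop :=
  ∀ a b : X, a < b → ∃ c d : X, a ≤ c ∧ c < d ∧ d ≤ b ∧
    TopologicalSpace.SeparableSpace (Icc c d)

section ConditionallyComplete

variable {X : Type*} [ConditionallyCompleteLinearOrder X] [TopologicalSpace X] [OrderTopology X]
  [DenselyOrdered X] [CompactSpace X]

theorem exists_orderIso_extension {c d : X} {S : Set X} (hSsub : S ⊆ Ioo c d)
    (hS : Ioo c d ⊆ closure S) (φ : S ≃o S) :
    ∃ F : X ≃o X, (∀ x ∉ Ioo c d, F x = x) ∧ ∀ s : S, F s = φ s := by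
  classical
  set T := S ∪ (Ioo c d)ᶜ
  have hT : Dense T := fun x => by
    by_cases hx : x ∈ Ioo c d
    · exact closure_mono subset_union_left (hS hx)
    · exact subset_closure (Or.inr hx)
  have hext (ψ : S ≃o S) :
      ∃ F : X → X, Monotone F ∧ EqOn (Equiv.Perm.ofSubtype ψ.toEquiv) F T :=
    (monotoneOn_ofSubtype_union_compl_Ioo hSsub ψ).exists_monotone_extension
      (isCompact_univ.bddBelow.mono (subset_univ _))
      (isCompact_univ.bddAbove.mono (subset_univ _))
  have hinv {ψ : S ≃o S} {F F' : X → X} (hFm : Monotone F) (hF'm : Monotone F')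
      (hF : EqOn (Equiv.Perm.ofSubtype ψ.toEquiv) F T)
      (hF' : EqOn (Equiv.Perm.ofSubtype ψ.symm.toEquiv) F' T) : F' ∘ F = id := by
    refine (hF'm.comp hFm).eq_id_of_eqOn_dense hT fun t ht => ?_
    have hmaps : Equiv.Perm.ofSubtype ψ.toEquiv t ∈ T := by
      by_cases htS : t ∈ S
      · exact Or.inl ((Equiv.Perm.ofSubtype_apply_mem_iff_mem _ t).2 htS)
      · rwa [Equiv.Perm.ofSubtype_apply_of_not_mem _ htS]
    rw [Function.comp_apply, ← hF ht, ← hF' hmaps, show ψ.symm.toEquiv = ψ.toEquiv⁻¹ from rfl,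
      map_inv]
    exact Equiv.symm_apply_apply _ t
  obtain ⟨F, hFm, hF⟩ := hext φ
  obtain ⟨F', hF'm, hF'⟩ := hext φ.symm
  refine ⟨Equiv.toOrderIso ⟨F, F', congrFun (hinv hFm hF'm hF hF'),
    congrFun (hinv hF'm hFm hF' (by simpa using hF))⟩ hFm hF'm, fun x hx => ?_, fun s => ?_⟩
  · have hxS : x ∉ S := fun h => hx (hSsub h)
    exact (hF (Or.inr hx)).symm.trans (Equiv.Perm.ofSubtype_apply_of_not_mem _ hxS)
  · exact (hF (Or.inl s.2)).symm.trans (Equiv.Perm.ofSubtype_apply_coe _ s)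

theorem exists_orderIso_not_commute {c d : X} (hcd : c < d)
    [TopologicalSpace.SeparableSpace (Icc c d)] :
    ∃ σ ρ : X ≃o X, (∀ x ∉ Ioo c d, σ x = x) ∧ (∀ x ∉ Ioo c d, ρ x = x) ∧
      ∃ z, σ (ρ z) ≠ ρ (σ z) := by
  obtain ⟨S, hSsub, hSc, hS⟩ := exists_countable_subset_Ioo_subset_closure (c := c) (d := d)
  obtain ⟨e⟩ := nonempty_orderIso_rat_of_Ioo_subset_closure hcd hSsub hSc hS
  obtain ⟨σ, hσ, hσS⟩ := exists_orderIso_extension hSsub hS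
    (e.symm.trans ((OrderIso.addRight (1 : ℚ)).trans e))
  obtain ⟨ρ, hρ, hρS⟩ := exists_orderIso_extension hSsub hS
    (e.symm.trans ((OrderIso.mulLeft₀ (2 : ℚ) two_pos).trans e))
  refine ⟨σ, ρ, hσ, hρ, e 1, ?_⟩
  simp only [hσS, hρS, OrderIso.trans_apply, OrderIso.symm_apply_apply, OrderIso.addRight_apply,
    OrderIso.mulLeft₀_apply, Ne, Subtype.val_inj, e.apply_eq_iff_eq]
  norm_num

variable {G : Type*} [Group G] [TopologicalSpace G] [IsTopologicalGroup G] [T2Space G]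
  {π : G →* (X ≃ₜ X)}

theorem eventually_exists_apply_mem_Ioo (hinj : Function.Injective π)
    (hsurj : ∀ f : X ≃ₜ X, Monotone f → f ∈ range π) (hX : HasSeparableSubintervals X)
    {p q : X} (hpq : p < q) : ∀ᶠ g in 𝓝 (1 : G), ∃ x ∈ Ioo p q, π g x ∈ Ioo p q := by
  obtain ⟨c, d, hpc, hcd, hdq, hsep⟩ := hX p q hpq
  obtain ⟨σ, ρ, hσ, hρ, z, hz⟩ := exists_orderIso_not_commute hcd
  obtain ⟨a, ha⟩ := hsurj σ.toHomeomorph σ.monotone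
  obtain ⟨b, hb⟩ := hsurj ρ.toHomeomorph ρ.monotone
  have hab : ¬Commute a b := fun h => hz <| by
    simpa [ha, hb] using DFunLike.congr_fun (h.map π).eq z
  filter_upwards [eventually_not_commute_conj hab] with g hg
  by_contra! hmaps
  refine hg (hinj ?_)
  have := (Homeomorph.commute_conj_of_mapsTo_compl (g := π g) (σ := π a) (ρ := π b)
    (s := Ioo c d) (by simpa [ha] using hσ) (by simpa [hb] using hρ)
    fun x hx hgx => hmaps x (Ioo_subset_Ioo hpc hdq hx) (Ioo_subset_Ioo hpc hdq hgx)).eq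
  simpa only [map_mul, map_inv] using this

theorem eventually_monotone (hinj : Function.Injective π)
    (hsurj : ∀ f : X ≃ₜ X, Monotone f → f ∈ range π) (hX : HasSeparableSubintervals X) :
    ∀ᶠ g in 𝓝 (1 : G), Monotone (π g) := by
  rcases subsingleton_or_nontrivial X with _ | _
  · exact .of_forall fun g => Subsingleton.monotone _
  obtain ⟨x, y, hxy⟩ := exists_pair_lt X
  obtain ⟨m, hxm, hmy⟩ := exists_between hxy
  filter_upwards [eventually_exists_apply_mem_Ioo hinj hsurj hX hxm,
    eventually_exists_apply_mem_Ioo hinj hsurj hX hmy] with g ⟨u, hu, hgu⟩ ⟨v, hv, hgv⟩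
  refine ((π g).continuous.strictMono_of_inj (π g).injective).elim StrictMono.monotone
    fun hanti => ?_
  exact ((hanti (hu.2.trans hv.1)).not_gt (hgu.2.trans hgv.1)).elim

theorem eventually_lt_apply (hinj : Function.Injective π)
    (hsurj : ∀ f : X ≃ₜ X, Monotone f → f ∈ range π) (hX : HasSeparableSubintervals X)
    {a y : X} (hay : a < y) : ∀ᶠ g in 𝓝 (1 : G), a < π g y := by
  filter_upwards [eventually_monotone hinj hsurj hX,
    eventually_exists_apply_mem_Ioo hinj hsurj hX hay] with g hmono ⟨x, hx, hgx⟩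
  exact hgx.1.trans_le (hmono hx.2.le)

theorem eventually_apply_lt (hinj : Function.Injective π)
    (hsurj : ∀ f : X ≃ₜ X, Monotone f → f ∈ range π) (hX : HasSeparableSubintervals X)
    {y b : X} (hyb : y < b) : ∀ᶠ g in 𝓝 (1 : G), π g y < b := by
  filter_upwards [eventually_monotone hinj hsurj hX,
    eventually_exists_apply_mem_Ioo hinj hsurj hX hyb] with g hmono ⟨x, hx, hgx⟩
  exact (hmono hx.1.le).trans_lt hgx.2

theorem tendsto_apply_nhds_one_prod (hinj : Function.Injective π)
    (hsurj : ∀ f : X ≃ₜ X, Monotone f → f ∈ range π) (hX : HasSeparableSubintervals X) (x : X) :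
    Tendsto (fun p : G × X => π p.1 p.2) (𝓝 1 ×ˢ 𝓝 x) (𝓝 x) := by
  refine tendsto_order.2 ⟨fun a hax => ?_, fun b hxb => ?_⟩
  · obtain ⟨y, hay, hyx⟩ := exists_between hax
    filter_upwards [((eventually_monotone hinj hsurj hX).and
      (eventually_lt_apply hinj hsurj hX hay)).prod_mk (Ioi_mem_nhds hyx)]
      with p ⟨⟨hmono, hgy⟩, hyp⟩
    exact hgy.trans_le (hmono (le_of_lt hyp))
  · obtain ⟨y, hxy, hyb⟩ := exists_between hxb
    filter_upwards [((eventually_monotone hinj hsurj hX).and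
      (eventually_apply_lt hinj hsurj hX hyb)).prod_mk (Iio_mem_nhds hxy)]
      with p ⟨⟨hmono, hgy⟩, hpy⟩
    exact (hmono (le_of_lt hpy)).trans_lt hgy

theorem continuous_toContinuousMap_of_hasSeparableSubintervals (hinj : Function.Injective π)
    (hsurj : ∀ f : X ≃ₜ X, Monotone f → f ∈ range π) (hX : HasSeparableSubintervals X) :
    Continuous fun g => (π g : C(X, X)) :=
  ContinuousMap.continuous_of_continuous_uncurry _ <|
    continuous_apply_of_tendsto_nhds_one π (tendsto_apply_nhds_one_prod hinj hsurj hX)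

end ConditionallyComplete

/-- Let `X` be a compact connected LOTS such that every pair `a < b` admits `a ≤ c < d ≤ b`
with `[c,d]` separable.  Then both the group `H₊(X)` of order-preserving homeomorphisms
(realized as the subgroup with carrier the monotone homeomorphisms, with the subspace
compact-open topology) and the full homeomorphism group `H(X)` (with the compact-open
topology) are `a`-minimal: their topologies are the smallest Hausdorff group topologies,
i.e. every Hausdorff group topology on them is finer. -/
theorem orderHomeo_and_homeo_aMinimal_of_separable {X : Type*} [LinearOrder X]
    [TopologicalSpace X] [OrderTopology X] [CompactSpace X] [ConnectedSpace X]
    (hC : ∀ a b : X, a < b → ∃ c d : X, a ≤ c ∧ c < d ∧ d ≤ b ∧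
      TopologicalSpace.SeparableSpace (Set.Icc c d))
    (H : Subgroup (X ≃ₜ X)) (hH : H.carrier = {f : X ≃ₜ X | Monotone ⇑f}) :
    (∀ t : TopologicalSpace ↥H, @T2Space ↥H t → @IsTopologicalGroup ↥H t _ →
      t ≤ (instTopologicalSpaceSubtype : TopologicalSpace ↥H)) ∧
    (∀ t : TopologicalSpace (X ≃ₜ X), @T2Space (X ≃ₜ X) t → @IsTopologicalGroup (X ≃ₜ X) t _ →
      t ≤ homeoCompactOpen) := by
  let := conditionallyCompleteLinearOrderOfCompactSpace X
  have := denselyOrdered_of_preconnectedSpace (α := X)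
  refine ⟨fun t _ _ => ?_, fun t _ _ => ?_⟩
  · have hsurj (f : X ≃ₜ X) (hf : Monotone f) : f ∈ range H.subtype :=
      ⟨⟨f, by rw [← Subgroup.mem_carrier, hH]; exact hf⟩, rfl⟩
    rw [← continuous_id_iff_le]
    exact continuous_induced_rng.2 <| continuous_induced_rng.2 <|
      continuous_toContinuousMap_of_hasSeparableSubintervals H.subtype_injective hsurj hC
  · exact continuous_iff_le_induced.1 <|
      continuous_toContinuousMap_of_hasSeparableSubintervals (π := MonoidHom.id _)
        Function.injective_id (fun f _ => ⟨f, rfl⟩) hC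
end

section
/- Every separable compact connected linearly ordered topological space with at least two points is homeomorphic to the real unit interval [0,1]. -/
/-!
A connected linear order is densely ordered, so a countable dense subset of `X` avoiding the
endpoints is order-isomorphic to `ℚ` by Cantor's back-and-forth argument, and so is one of `[0, 1]`.
The resulting order isomorphism between dense subsets extends by suprema to an order isomorphism
`X ≃o [0, 1]`, which is a homeomorphism for the order topologies.
-/

open Set TopologicalSpace

section DenseSubset

variable {X : Type*} [LinearOrder X] [TopologicalSpace X] [OrderTopology X] [DenselyOrdered X]
  {s : Set X}

lemma Dense.denselyOrdered_subtype (hs : Dense s) : DenselyOrdered s where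
  dense _ _ hab :=
    let ⟨c, hc, hac, hcb⟩ := hs.exists_between hab
    ⟨⟨c, hc⟩, hac, hcb⟩

lemma Dense.noMinOrder_subtype (hs : Dense s) (hbot : ∀ x, IsBot x → x ∉ s) : NoMinOrder s where
  exists_lt d := by
    obtain ⟨x, hxd⟩ : ∃ x, x < (d : X) := by simpa [IsBot] using fun h => hbot d h d.2
    obtain ⟨c, hc, -, hcd⟩ := hs.exists_between hxd
    exact ⟨⟨c, hc⟩, hcd⟩

lemma Dense.noMaxOrder_subtype (hs : Dense s) (htop : ∀ x, IsTop x → x ∉ s) : NoMaxOrder s where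
  exists_gt d := by
    obtain ⟨x, hdx⟩ : ∃ x, (d : X) < x := by simpa [IsTop] using fun h => htop d h d.2
    obtain ⟨c, hc, hdc, -⟩ := hs.exists_between hdx
    exact ⟨⟨c, hc⟩, hdc⟩

end DenseSubset

section Extension

variable {X Y : Type*} [LinearOrder X] [TopologicalSpace X] [OrderTopology X] [CompactSpace X]
  [DenselyOrdered X] [CompleteLinearOrder Y] [TopologicalSpace Y] [OrderTopology Y]
  [DenselyOrdered Y]

/-- The extension `x ↦ ⨆ {e d | d ≤ x}` is strictly monotone with dense range, hence continuous;
compactness of `X` then makes its range closed, so it is onto. -/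
theorem Dense.nonempty_orderIso_of_orderIso {s : Set X} {t : Set Y} (hs : Dense s) (ht : Dense t)
    (e : s ≃o t) : Nonempty (X ≃o Y) := by
  let g : X → Y := fun x => ⨆ (d : s) (_ : (d : X) ≤ x), (e d : Y)
  have g_le {x : X} {d : s} (hxd : x ≤ d) : g x ≤ e d :=
    iSup₂_le fun _ hd => e.monotone (hd.trans hxd)
  have le_g {x : X} {d : s} (hdx : (d : X) ≤ x) : (e d : Y) ≤ g x := le_iSup₂_of_le d hdx le_rfl
  have g_strictMono : StrictMono g := by
    intro x y hxy
    obtain ⟨a, ha, hxa, hay⟩ := hs.exists_between hxy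
    obtain ⟨b, hb, hab, hby⟩ := hs.exists_between hay
    calc g x ≤ e ⟨a, ha⟩ := g_le hxa.le
      _ < e ⟨b, hb⟩ := e.strictMono hab
      _ ≤ g y := le_g hby.le
  have g_denseRange : DenseRange g := by
    refine ht.mono fun y hy => ?_
    obtain ⟨d, hd⟩ := e.surjective ⟨y, hy⟩
    exact ⟨d, (le_antisymm (g_le le_rfl) (le_g le_rfl)).trans (congrArg Subtype.val hd)⟩
  have g_surjective : Function.Surjective g := by
    have g_continuous := g_strictMono.monotone.continuous_of_denseRange g_denseRange
    rw [← range_eq_univ, ← g_denseRange.closure_range,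
      (isCompact_range g_continuous).isClosed.closure_eq]
  exact ⟨g_strictMono.orderIsoOfSurjective g g_surjective⟩

end Extension

theorem exists_dense_orderIso_rat (X : Type*) [LinearOrder X] [TopologicalSpace X] [OrderTopology X]
    [DenselyOrdered X] [SeparableSpace X] [Nontrivial X] :
    ∃ s : Set X, Dense s ∧ Nonempty (s ≃o ℚ) := by
  obtain ⟨s, s_countable, s_dense, s_bot, s_top⟩ := exists_countable_dense_no_bot_top X
  have := s_countable.to_subtype
  have := s_dense.denselyOrdered_subtype
  have := s_dense.noMinOrder_subtype s_bot
  have := s_dense.noMaxOrder_subtype s_top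
  have := s_dense.nonempty.to_subtype
  exact ⟨s, s_dense, Order.iso_of_countable_dense s ℚ⟩

theorem nonempty_orderIso_of_separableSpace {X Y : Type*} [LinearOrder X] [TopologicalSpace X]
    [OrderTopology X] [CompactSpace X] [DenselyOrdered X] [SeparableSpace X] [Nontrivial X]
    [CompleteLinearOrder Y] [TopologicalSpace Y] [OrderTopology Y] [DenselyOrdered Y]
    [SeparableSpace Y] [Nontrivial Y] : Nonempty (X ≃o Y) := by
  obtain ⟨s, s_dense, ⟨eX⟩⟩ := exists_dense_orderIso_rat X
  obtain ⟨t, t_dense, ⟨eY⟩⟩ := exists_dense_orderIso_rat Y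
  exact s_dense.nonempty_orderIso_of_orderIso t_dense (eX.trans eY.symm)

/-- Every separable compact connected linearly ordered topological space with at least two
points is homeomorphic to the real unit interval `[0,1]`. -/
theorem separable_ordered_continuum_homeomorph_unitInterval {X : Type*} [LinearOrder X]
    [TopologicalSpace X] [OrderTopology X] [CompactSpace X] [ConnectedSpace X]
    [TopologicalSpace.SeparableSpace X] [Nontrivial X] :
    Nonempty (X ≃ₜ Set.Icc (0 : ℝ) 1) := by
  have : DenselyOrdered X := denselyOrdered_of_preconnectedSpace
  have : Fact ((0 : ℝ) ≤ 1) := ⟨zero_le_one⟩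
  obtain ⟨e⟩ : Nonempty (X ≃o Set.Icc (0 : ℝ) 1) := nonempty_orderIso_of_separableSpace
  exact ⟨e.toHomeomorph⟩
end
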